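/- arXiv:1901.01797 — 2 statements merged into one kernel-verified Lean document; each statement's English description precedes it below -/
import Mathlib

section
/- Let G be a chordal ordered graph, let v be the smallest vertex of G, let r ≥ 0 be an integer, let C be the vertex set of a connected component of G − N_r[v], and let K be the set of vertices in N_r[v] that have a neighbor in C. Then K induces a clique in G, and every vertex of K is smaller than every vertex of C. -/
/-- A layering of a simple graph: adjacent vertices differ by at most 1. -/
def IsLayering {V : Type*} (G : SimpleGraph V) (lam : V → ℤ) : Prop :=
  ∀ ⦃u v : V⦄, G.Adj u v → |lam u - lam v| ≤ 1

/-- The spanning subgraph of `G` keeping only the edges with both ends in `U`.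
Reachability and distances between vertices of `U` in this graph coincide with those
in the induced subgraph `G[U]`. -/
def restrictSet {V : Type*} (G : SimpleGraph V) (U : Set V) : SimpleGraph V where
  Adj u v := G.Adj u v ∧ u ∈ U ∧ v ∈ U
  symm := ⟨fun _ _ ⟨h, hu, hv⟩ => ⟨h.symm, hv, hu⟩⟩
  loopless := ⟨fun u ⟨h, _, _⟩ => G.irrefl h⟩

/-- `C` is the vertex set of a connected component of `G − B`. -/
def IsComponentOf {V : Type*} (G : SimpleGraph V) (B C : Set V) : Prop :=
  ∃ x, x ∉ B ∧ C = {y | (restrictSet G Bᶜ).Reachable x y}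

/-- A graph with an ordered vertex set is chordal (as an ordered graph) if for every
vertex `v` the neighbors of `v` smaller than `v` induce a clique. -/
def ChordalOrdered {V : Type*} [LinearOrder V] (G : SimpleGraph V) : Prop :=
  ∀ ⦃v u w : V⦄, G.Adj v u → G.Adj v w → u < v → w < v → u ≠ w → G.Adj u w

/-- The closed ball `N_r[v]`: vertices at distance at most `r` from `v`. -/
def closedBall {V : Type*} (G : SimpleGraph V) (v : V) (r : ℕ) : Set V :=
  {u | G.Reachable v u ∧ G.dist v u ≤ r}

/-!
In a chordal ordered graph every walk can be shortened, through a subset of its vertices, to a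
walk between the same endpoints that never rises above the larger endpoint: the two walk
neighbours of a local maximum lie below it, hence are equal or adjacent, and the maximum can be
cut out. Applied to a shortest walk from `x` to the minimum `v`, this gives `x` a lower
neighbour one step closer to `v`, and chordality then shows that stepping down an edge never
increases the distance to `v`. So a vertex `x ∈ N_r[v]` adjacent to `C` lies below all of `C`:
otherwise a low walk from `x` into `C` would step down from `x` into `C`, landing in `N_r[v]`.
Two vertices of `K` are joined by a walk whose interior lies in `C`, above both of them, so its
low shortening is a single edge.
-/

open SimpleGraph

section Component

variable {V : Type*} {G : SimpleGraph V}

theorem restrictSet_le (U : Set V) : restrictSet G U ≤ G := fun _ _ h => h.1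

theorem restrictSet_reachable_mem {U : Set V} {a b : V} (h : (restrictSet G U).Reachable a b)
    (ha : a ∈ U) : b ∈ U := by
  obtain ⟨p⟩ := h
  induction p with
  | nil => exact ha
  | cons hadj _ ih => exact ih hadj.2.2

namespace IsComponentOf

variable {B C : Set V}

theorem notMem (hC : IsComponentOf G B C) {c : V} (hc : c ∈ C) : c ∉ B := by
  obtain ⟨x, hx, rfl⟩ := hC
  exact restrictSet_reachable_mem hc hx

theorem exists_walk_support_subset (hC : IsComponentOf G B C) {c c' : V} (hc : c ∈ C)
    (hc' : c' ∈ C) : ∃ p : G.Walk c c', ∀ z ∈ p.support, z ∈ C := by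
  classical
  obtain ⟨x, -, rfl⟩ := hC
  obtain ⟨p⟩ := (hc : (restrictSet G Bᶜ).Reachable x c).symm.trans hc'
  refine ⟨p.mapLe (restrictSet_le _), fun z hz => ?_⟩
  rw [Walk.support_mapLe_eq_support] at hz
  exact hc.trans (p.takeUntil z hz).reachable

end IsComponentOf

end Component

namespace ChordalOrdered

variable {V : Type*} [LinearOrder V] {G : SimpleGraph V}

theorem exists_walk_le_max (hG : ChordalOrdered G) {a b : V} (p : G.Walk a b) :
    ∃ q : G.Walk a b, q.length ≤ p.length ∧ q.support ⊆ p.support ∧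
      ∀ z ∈ q.support, z ≤ max a b := by
  induction hn : p.length using Nat.strong_induction_on generalizing a b with
  | _ n ih =>
    cases p with
    | nil => exact ⟨.nil, hn.le, List.Subset.refl _, by simp⟩
    | @cons _ c _ hac p' =>
      obtain ⟨q', hq'len, hq'sub, hq'le⟩ := ih p'.length (by simp [← hn]) p' rfl
      by_cases hc : c ≤ max a b
      · refine ⟨.cons hac q', by simpa [← hn] using hq'len, ?_, ?_⟩
        · simpa using List.cons_subset_cons a hq'sub
        · simp only [Walk.support_cons, List.mem_cons, forall_eq_or_imp, le_max_left, true_and]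
          exact fun z hz => (hq'le z hz).trans (max_le hc (le_max_right a b))
      -- `c` lies above its two neighbours on the walk, which are thus equal or adjacent
      push Not at hc
      have hac' : a < c := (le_max_left a b).trans_lt hc
      have hbc : b < c := (le_max_right a b).trans_lt hc
      cases q' with
      | nil => exact absurd hbc (lt_irrefl _)
      | @cons _ w _ hcw q'' =>
        have hwc : w < c := lt_of_le_of_ne (max_eq_left hbc.le ▸ hq'le w (by simp)) hcw.ne'
        have hshort :
            ∃ s : G.Walk a b, s.length < n ∧ s.support ⊆ (Walk.cons hac p').support := by
          have hq''sub : q''.support ⊆ p'.support :=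
            List.Subset.trans (by simp) hq'sub
          have hq''len : q''.length < p'.length := by simpa using hq'len
          rcases eq_or_ne w a with rfl | hwa
          · exact ⟨q'', by simp [← hn]; omega, List.Subset.trans hq''sub (by simp)⟩
          · have haw : G.Adj a w := hG hac.symm hcw hac' hwc (Ne.symm hwa)
            refine ⟨.cons haw q'', by simp [← hn]; omega, ?_⟩
            simpa using List.cons_subset_cons a hq''sub
        obtain ⟨s, hslen, hssub⟩ := hshort
        obtain ⟨q, hqlen, hqsub, hqle⟩ := ih s.length hslen s rfl
        exact ⟨q, by omega, List.Subset.trans hqsub hssub, hqle⟩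

theorem exists_adj_le_max (hG : ChordalOrdered G) {a b : V} (p : G.Walk a b) (hab : a ≠ b) :
    ∃ z, G.Adj a z ∧ z ≤ max a b ∧ z ∈ p.support ∧ G.dist z b < p.length := by
  obtain ⟨q, hqlen, hqsub, hqle⟩ := hG.exists_walk_le_max p
  cases q with
  | nil => exact absurd rfl hab
  | cons haz q' =>
    refine ⟨_, haz, hqle _ (by simp), hqsub (by simp), ?_⟩
    have := dist_le q'
    simp only [Walk.length_cons] at hqlen
    omega

theorem dist_le_of_adj_of_lt (hG : ChordalOrdered G) {v : V} (hv : ∀ u, v ≤ u) {x y : V}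
    (hxy : G.Adj x y) (hyx : y < x) : G.dist v y ≤ G.dist v x := by
  by_cases hvx : G.Reachable v x
  swap
  · rw [dist_eq_zero_of_not_reachable fun hvy => hvx (hvy.trans hxy.symm.reachable)]
    exact Nat.zero_le _
  obtain ⟨p, hp⟩ := hvx.symm.exists_walk_length_eq_dist
  obtain ⟨w, hxw, hwx, -, hwv⟩ := hG.exists_adj_le_max p ((hv y).trans_lt hyx).ne'
  rw [max_eq_left ((hv y).trans hyx.le)] at hwx
  rw [SimpleGraph.dist_comm (u := v) (v := x), ← hp]
  rw [SimpleGraph.dist_comm] at hwv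
  rcases eq_or_ne w y with rfl | hwy
  · exact hwv.le
  · have hwy' : G.Adj w y := hG hxw hxy (lt_of_le_of_ne hwx hxw.ne') hyx hwy
    have := hwy'.diff_dist_adj (u := v)
    omega

theorem lt_of_adj_mem_component (hG : ChordalOrdered G) {v : V} (hv : ∀ u, v ≤ u) {r : ℕ}
    {C : Set V} (hC : IsComponentOf G (closedBall G v r) C) {x c' c : V}
    (hx : x ∈ closedBall G v r) (hxc' : G.Adj x c') (hc' : c' ∈ C) (hc : c ∈ C) : x < c := by
  by_contra! hcx
  obtain ⟨q, hq⟩ := hC.exists_walk_support_subset hc' hc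
  have hxc : x ≠ c := fun h => hC.notMem hc (h ▸ hx)
  obtain ⟨z, hxz, hzx, hz, -⟩ := hG.exists_adj_le_max (.cons hxc' q) hxc
  rw [max_eq_left hcx] at hzx
  have hzC : z ∈ C := by
    rw [Walk.support_cons, List.mem_cons] at hz
    exact hq z (hz.resolve_left hxz.ne')
  refine hC.notMem hzC ⟨hx.1.trans hxz.reachable, ?_⟩
  exact (hG.dist_le_of_adj_of_lt hv hxz (lt_of_le_of_ne hzx hxz.ne')).trans hx.2

theorem adj_of_forall_lt_component (hG : ChordalOrdered G) {B C : Set V}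
    (hC : IsComponentOf G B C) {x y cx cy : V} (hxy : x ≠ y) (hxc : G.Adj x cx) (hcx : cx ∈ C)
    (hyc : G.Adj y cy) (hcy : cy ∈ C) (hxC : ∀ c ∈ C, x < c) (hyC : ∀ c ∈ C, y < c) :
    G.Adj x y := by
  obtain ⟨q, hq⟩ := hC.exists_walk_support_subset hcx hcy
  obtain ⟨z, hxz, hzle, hz, -⟩ := hG.exists_adj_le_max (.cons hxc (q.concat hyc.symm)) hxy
  simp only [Walk.support_cons, Walk.support_concat, List.mem_cons, List.mem_append,
    List.not_mem_nil, or_false] at hz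
  rcases hz with rfl | hz | rfl
  · exact absurd hxz (G.irrefl)
  · exact absurd hzle (not_le.2 (max_lt (hxC z (hq z hz)) (hyC z (hq z hz))))
  · exact hxz

end ChordalOrdered

theorem stmt_6_general {V : Type*} [LinearOrder V] (G : SimpleGraph V)
    (hG : ChordalOrdered G) (v : V) (hv : ∀ u, v ≤ u) (r : ℕ)
    (C : Set V) (hC : IsComponentOf G (closedBall G v r) C)
    (K : Set V) (hK : K = {u ∈ closedBall G v r | ∃ c ∈ C, G.Adj u c}) :
    (∀ x ∈ K, ∀ y ∈ K, x ≠ y → G.Adj x y) ∧ (∀ x ∈ K, ∀ c ∈ C, x < c) := by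
  subst hK
  have hlt : ∀ x ∈ {u ∈ closedBall G v r | ∃ c ∈ C, G.Adj u c}, ∀ c ∈ C, x < c :=
    fun x ⟨hx, _, hc', hxc'⟩ _ hc => hG.lt_of_adj_mem_component hv hC hx hxc' hc' hc
  refine ⟨fun x hxK y hyK hxy => ?_, hlt⟩
  obtain ⟨-, cx, hcx, hxc⟩ := id hxK
  obtain ⟨-, cy, hcy, hyc⟩ := id hyK
  exact hG.adj_of_forall_lt_component hC hxy hxc hcx hyc hcy (hlt x hxK) (hlt y hyK)

/-- Let `G` be a chordal ordered graph, `v` its smallest vertex, `r ≥ 0`, `C` the vertex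
set of a connected component of `G − N_r[v]` and `K` the set of vertices of `N_r[v]`
with a neighbor in `C`. Then `K` induces a clique and every vertex of `K` is smaller
than every vertex of `C`. -/
theorem stmt_6 {V : Type*} [Fintype V] [LinearOrder V] (G : SimpleGraph V)
    (hG : ChordalOrdered G) (v : V) (hv : ∀ u, v ≤ u) (r : ℕ)
    (C : Set V) (hC : IsComponentOf G (closedBall G v r) C)
    (K : Set V) (hK : K = {u ∈ closedBall G v r | ∃ c ∈ C, G.Adj u c}) :
    (∀ x ∈ K, ∀ y ∈ K, x ≠ y → G.Adj x y) ∧ (∀ x ∈ K, ∀ c ∈ C, x < c) :=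
  stmt_6_general G hG v hv r C hC K hK
end

section
/- Let G be a finite simple graph, λ a layering of G, and let r', r, ℓ, m be integers with 0 ≤ r' ≤ r and ℓ > 4r. Let R be an (ℓ, r)-cover of the integers, let p be an m-plan for R, and let (ψ_S) be an r'-local predicate family on G. Suppose that for each I ∈ R there is a set W_I ⊆ λ⁻¹(M_{2r}(I)) with |W_I| = p(I) such that any two distinct vertices of W_I are at distance greater than 2r' in G[λ⁻¹(I)] and ψ_{λ⁻¹(I)}(w) holds for every w ∈ W_I. Then there exists a set W ⊆ V(G) with |W| = m such that any two distinct vertices of W are at distance greater than 2r' in G and ψ_{V(G)}(w) holds for every w ∈ W. -/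
/-- The interval of `l` consecutive integers with left endpoint `i`. -/
def Iv (l : ℕ) (i : ℤ) : Set ℤ := Set.Icc i (i + l - 1)

/-- The middle part `M_d(I)` of the interval of length `l` with left endpoint `i`. -/
def Md (l d : ℕ) (i : ℤ) : Set ℤ := Set.Icc (i + d) (i + l - d - 1)

/-- `i` is a left endpoint of an interval of the `(l, r)`-cover with residue `n`,
i.e. `i ≡ n (mod l − 2r)`. -/
def inCover (l r : ℕ) (n i : ℤ) : Prop := ((l : ℤ) - 2 * r) ∣ (i - n)

/-- An `m`-plan for the `(l, r)`-cover with residue `n`: a finitely supported function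
on intervals (identified with their left endpoints) with values summing to `m`,
supported on the intervals of the cover. -/
def IsPlan (l r : ℕ) (n : ℤ) (m : ℕ) (p : ℤ → ℕ) : Prop :=
  {i | p i ≠ 0}.Finite ∧ (∀ i, p i ≠ 0 → inCover l r n i) ∧ ∑ᶠ i, p i = m

/-- All vertices of `W` are pairwise at distance greater than `2r'` in `G` (vertices in
different components being at infinite distance). -/
def PairwiseFar {V : Type*} (G : SimpleGraph V) (r' : ℕ) (W : Finset V) : Prop :=
  ∀ w ∈ W, ∀ w' ∈ W, w ≠ w' → (G.Reachable w w' → 2 * r' < G.dist w w')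

/-- An `r'`-local predicate family on `G`: a family of predicates `ψ S` (for `S ⊆ V`)
such that whenever `S` contains the ball of radius `r'` around `v`, `ψ S v ↔ ψ univ v`. -/
def IsLocalFamily {V : Type*} (G : SimpleGraph V) (r' : ℕ) (ψ : Set V → V → Prop) : Prop :=
  ∀ (v : V) (S : Set V), {u | G.Reachable v u ∧ G.dist v u ≤ r'} ⊆ S → (ψ S v ↔ ψ Set.univ v)

open SimpleGraph

section

variable {V : Type*} {G : SimpleGraph V} {lam : V → ℤ}

lemma IsLayering.abs_sub_le_length (hlam : IsLayering G lam) {u v : V} (q : G.Walk u v) :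
    |lam u - lam v| ≤ q.length := by
  induction q with
  | nil => simp
  | @cons a b c hab q ih =>
    calc |lam a - lam c| ≤ |lam a - lam b| + |lam b - lam c| := abs_sub_le _ _ _
      _ ≤ 1 + q.length := add_le_add (hlam hab) ih
      _ = (q.cons hab).length := by push_cast [Walk.length_cons]; ring

lemma IsLayering.abs_sub_le_dist (hlam : IsLayering G lam) {u v : V} (h : G.Reachable u v) :
    |lam u - lam v| ≤ G.dist u v := by
  obtain ⟨q, hq⟩ := h.exists_walk_length_eq_dist
  exact hq ▸ hlam.abs_sub_le_length q

lemma IsLayering.mem_Iv_of_dist_le (hlam : IsLayering G lam) {l d : ℕ} {i : ℤ} {w x : V}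
    (hw : lam w ∈ Md l d i) (hx : G.Reachable w x) (hdx : G.dist w x ≤ d) :
    lam x ∈ Iv l i := by
  have := abs_le.mp ((hlam.abs_sub_le_dist hx).trans (Int.ofNat_le.mpr hdx))
  simp only [Md, Iv, Set.mem_Icc] at hw ⊢
  omega

lemma Md_subset_Md {l d d' : ℕ} (h : d' ≤ d) (i : ℤ) : Md l d i ⊆ Md l d' i := by
  intro a ha
  simp only [Md, Set.mem_Icc] at ha ⊢
  omega

lemma lt_abs_sub_of_mem_Md {l r : ℕ} {n i j a b : ℤ}
    (hi : inCover l r n i) (hj : inCover l r n j) (hij : i ≠ j)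
    (ha : a ∈ Md l (2 * r) i) (hb : b ∈ Md l (2 * r) j) : 2 * r < |a - b| := by
  wlog hlt : i < j generalizing i j a b
  · rw [abs_sub_comm]
    exact this hj hi hij.symm hb ha (by omega)
  -- The cover's step `l - 2r` puts `M_{2r}(I)` left of `j`; `M_{2r}(J)` starts at `j + 2r`.
  have hstep : (l : ℤ) - 2 * r ≤ j - i :=
    Int.le_of_dvd (by omega) (by simpa using dvd_sub hj hi)
  simp only [Md, Set.mem_Icc] at ha hb
  rw [lt_abs]
  right
  push_cast at ha hb
  omega

lemma restrictSet_reachable_and_dist_le {U : Set V} {u v : V} (h : G.Reachable u v)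
    (hU : ∀ x, G.Reachable u x → G.dist u x ≤ G.dist u v → x ∈ U) :
    (restrictSet G U).Reachable u v ∧ (restrictSet G U).dist u v ≤ G.dist u v := by
  classical
  obtain ⟨q, hq⟩ := h.exists_walk_length_eq_dist
  have hsupp : ∀ x ∈ q.support, x ∈ U := fun x hx =>
    hU x ⟨q.takeUntil x hx⟩ ((dist_le _).trans (hq ▸ q.length_takeUntil_le_length hx))
  have hedges : ∀ e ∈ q.edges, e ∈ (restrictSet G U).edgeSet := by
    intro e he
    induction e with
    | h a b =>
      exact ⟨q.adj_of_mem_edges he, hsupp a (q.fst_mem_support_of_mem_edges he),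
        hsupp b (q.snd_mem_support_of_mem_edges he)⟩
  refine ⟨⟨q.transfer _ hedges⟩, ?_⟩
  calc _ ≤ (q.transfer _ hedges).length := dist_le _
    _ = G.dist u v := by rw [q.length_transfer, hq]

lemma PairwiseFar.of_restrictSet_preimage_Iv (hlam : IsLayering G lam) {l r' : ℕ} {i : ℤ}
    {W : Finset V} (hW : PairwiseFar (restrictSet G (lam ⁻¹' Iv l i)) r' W)
    (hmid : ∀ w ∈ W, lam w ∈ Md l (2 * r') i) : PairwiseFar G r' W := by
  intro w hw w' hw' hne hre
  by_contra! hle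
  obtain ⟨hre', hdist⟩ := restrictSet_reachable_and_dist_le hre fun x hx hdx =>
    hlam.mem_Iv_of_dist_le (hmid w hw) hx (hdx.trans hle)
  exact (hW w hw w' hw' hne hre').not_ge (hdist.trans hle)

lemma PairwiseFar.biUnion {ι : Type*} [DecidableEq V] {r' : ℕ} {T : Finset ι}
    {W : ι → Finset V} (hW : ∀ i ∈ T, PairwiseFar G r' (W i))
    (hsep : ∀ i ∈ T, ∀ j ∈ T, i ≠ j → ∀ w ∈ W i, ∀ w' ∈ W j,
      G.Reachable w w' → 2 * r' < G.dist w w') :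
    PairwiseFar G r' (T.biUnion W) := by
  intro w hw w' hw' hne
  obtain ⟨i, hi, hwi⟩ := Finset.mem_biUnion.mp hw
  obtain ⟨j, hj, hwj⟩ := Finset.mem_biUnion.mp hw'
  obtain rfl | hij := eq_or_ne i j
  · exact hW i hi w hwi w' hwj hne
  · exact hsep i hi j hj hij w hwi w' hwj

lemma IsLocalFamily.of_mem_Md {r' l : ℕ} {i : ℤ} {ψ : Set V → V → Prop}
    (hψ : IsLocalFamily G r' ψ) (hlam : IsLayering G lam) {w : V} (hw : lam w ∈ Md l r' i)
    (h : ψ (lam ⁻¹' Iv l i) w) : ψ Set.univ w :=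
  (hψ w _ fun _ hx => hlam.mem_Iv_of_dist_le hw hx.1 hx.2).mp h

end

theorem stmt_11_general {V : Type*} (G : SimpleGraph V) (lam : V → ℤ)
    (hlam : IsLayering G lam)
    (r' r l m : ℕ) (hr : r' ≤ r)
    (n : ℤ) (p : ℤ → ℕ) (hp : IsPlan l r n m p)
    (ψ : Set V → V → Prop) (hψ : IsLocalFamily G r' ψ)
    (hW : ∀ i : ℤ, inCover l r n i →
      ∃ W : Finset V, W.card = p i ∧ (∀ w ∈ W, lam w ∈ Md l (2 * r) i) ∧
        PairwiseFar (restrictSet G (lam ⁻¹' Iv l i)) r' W ∧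
        ∀ w ∈ W, ψ (lam ⁻¹' Iv l i) w) :
    ∃ W : Finset V, W.card = m ∧ PairwiseFar G r' W ∧ ∀ w ∈ W, ψ Set.univ w := by
  classical
  obtain ⟨hfin, hcov, hsum⟩ := hp
  choose! W hcard hmid hfar hψW using hW
  set T := hfin.toFinset
  have hT : ∀ i ∈ T, inCover l r n i := fun i hi => hcov i (hfin.mem_toFinset.mp hi)
  have hsep : ∀ i ∈ T, ∀ j ∈ T, i ≠ j → ∀ w ∈ W i, ∀ w' ∈ W j,
      2 * r < |lam w - lam w'| :=
    fun i hi j hj hij w hw w' hw' => lt_abs_sub_of_mem_Md (hT i hi) (hT j hj) hij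
      (hmid i (hT i hi) w hw) (hmid j (hT j hj) w' hw')
  refine ⟨T.biUnion W, ?_, ?_, ?_⟩
  · rw [Finset.card_biUnion, ← hsum, finsum_eq_sum p hfin]
    · exact Finset.sum_congr rfl fun i hi => hcard i (hT i hi)
    · intro i hi j hj hij
      refine Finset.disjoint_left.mpr fun w hwi hwj => ?_
      have := hsep i hi j hj hij w hwi w hwj
      simp only [sub_self, abs_zero] at this
      omega
  · refine PairwiseFar.biUnion (fun i hi => (hfar i (hT i hi)).of_restrictSet_preimage_Iv hlam
      fun w hw => Md_subset_Md (by omega) i (hmid i (hT i hi) w hw)) ?_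
    intro i hi j hj hij w hw w' hw' hre
    have := (hsep i hi j hj hij w hw w' hw').trans_le (hlam.abs_sub_le_dist hre)
    omega
  · intro w hw
    obtain ⟨i, hi, hwi⟩ := Finset.mem_biUnion.mp hw
    exact hψ.of_mem_Md hlam (Md_subset_Md (by omega) i (hmid i (hT i hi) w hwi))
      (hψW i (hT i hi) w hwi)

/-- If for each interval `I` of an `(l, r)`-cover there is a set `W_I ⊆ λ⁻¹(M_{2r}(I))`
of `p(I)` vertices, pairwise far apart in `G[λ⁻¹(I)]`, all satisfying `ψ_{λ⁻¹(I)}`,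
then there is a set of `m = Σ p(I)` vertices of `G`, pairwise far apart, all
satisfying `ψ_{V(G)}`. -/
theorem stmt_11 {V : Type*} [Fintype V] (G : SimpleGraph V) (lam : V → ℤ)
    (hlam : IsLayering G lam)
    (r' r l m : ℕ) (hr : r' ≤ r) (hl : 4 * r < l)
    (n : ℤ) (p : ℤ → ℕ) (hp : IsPlan l r n m p)
    (ψ : Set V → V → Prop) (hψ : IsLocalFamily G r' ψ)
    (hW : ∀ i : ℤ, inCover l r n i →
      ∃ W : Finset V, W.card = p i ∧ (∀ w ∈ W, lam w ∈ Md l (2 * r) i) ∧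
        PairwiseFar (restrictSet G (lam ⁻¹' Iv l i)) r' W ∧
        ∀ w ∈ W, ψ (lam ⁻¹' Iv l i) w) :
    ∃ W : Finset V, W.card = m ∧ PairwiseFar G r' W ∧ ∀ w ∈ W, ψ Set.univ w :=
  stmt_11_general G lam hlam r' r l m hr n p hp ψ hψ hW
end
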